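/- arXiv:2602.13098 — 2 statements merged into one kernel-verified Lean document; each statement's English description precedes it below -/
import Mathlib

section
/- Let ℓ > 0, let x, y ∈ ℝ, let w be distributed according to the Gaussian measure N(0, 1/ℓ²) on ℝ, and let b be independently uniformly distributed on [0, 2π]. Then the random Fourier feature pairing satisfies E_{w,b}[2 cos(w x + b) cos(w y + b)] = exp(−(x − y)² / (2ℓ²)); that is, the expected product of random cosine features equals the Gaussian (RBF) kernel with length scale ℓ. -/
open MeasureTheory ProbabilityTheory

lemma gauss_cos_aux (v : ℝ) (hv : 0 < v) (t : ℝ) :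
    ∫ w : ℝ, Real.exp (-w^2/(2*v)) * Real.cos (w * t)
      = Real.sqrt (2 * Real.pi * v) * Real.exp (-(v * t^2)/2) := by
  have hb : ((-(1/(2*v)) : ℝ) : ℂ).re < 0 := by
    simp only [Complex.ofReal_re]
    exact neg_neg_of_pos (by positivity)
  have J := integral_cexp_quadratic hb (t * Complex.I) 0
  have hint := integrable_cexp_quadratic' hb (t * Complex.I) 0
  have hre := integral_re hint
  rw [J] at hre
  have hlhs : ∀ w : ℝ, RCLike.re (Complex.exp (((-(1/(2*v)) : ℝ) : ℂ) * w^2 + (t*Complex.I)*w + 0))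
      = Real.exp (-w^2/(2*v)) * Real.cos (w * t) := by
    intro w
    have : (((-(1/(2*v)) : ℝ) : ℂ) * w^2 + (t*Complex.I)*w + 0)
        = (((-w^2/(2*v) : ℝ)) : ℂ) + ((w*t : ℝ) : ℂ) * Complex.I := by
      push_cast; ring
    rw [this]
    simp only [Complex.exp_re, Complex.add_re, Complex.add_im, Complex.ofReal_re,
      Complex.ofReal_im, Complex.mul_re, Complex.mul_im, Complex.I_re, Complex.I_im,
      RCLike.re_to_complex]
    ring_nf
  rw [integral_congr_ae (Filter.Eventually.of_forall hlhs)] at hre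
  rw [hre]
  have h1 : ((Real.pi : ℂ) / -((-(1/(2*v)) : ℝ) : ℂ)) = ((2*Real.pi*v : ℝ) : ℂ) := by
    have : (v : ℂ) ≠ 0 := by exact_mod_cast hv.ne'
    push_cast
    field_simp
  have h2 : ((2*Real.pi*v : ℝ) : ℂ) ^ (1/2 : ℂ) = ((Real.sqrt (2*Real.pi*v) : ℝ) : ℂ) := by
    rw [Real.sqrt_eq_rpow, Complex.ofReal_cpow (by positivity)]
    norm_num
  have h3 : (0 - (t*Complex.I)^2 / (4 * ((-(1/(2*v)) : ℝ) : ℂ))) = ((-(v * t^2)/2 : ℝ) : ℂ) := by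
    have hv0 : (v : ℂ) ≠ 0 := by exact_mod_cast hv.ne'
    push_cast
    field_simp
    ring_nf
    simp [Complex.I_sq]
  rw [h1, h2, h3, ← Complex.ofReal_exp, ← Complex.ofReal_mul]
  simp only [RCLike.re_to_complex, Complex.ofReal_re]

lemma gauss_cos (v : NNReal) (hv : 0 < (v:ℝ)) (t : ℝ) :
    ∫ w : ℝ, Real.cos (w * t) ∂(gaussianReal 0 v) = Real.exp (-((v:ℝ) * t^2)/2) := by
  have hv' : v ≠ 0 := by exact_mod_cast hv.ne'
  rw [gaussianReal_of_var_ne_zero 0 hv']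
  have hd : gaussianPDF 0 v = fun x => ((Real.toNNReal (gaussianPDFReal 0 v x) : NNReal) : ENNReal) :=
    rfl
  rw [hd, integral_withDensity_eq_integral_smul ((measurable_gaussianPDFReal 0 v).real_toNNReal)]
  simp_rw [NNReal.smul_def, smul_eq_mul, Real.coe_toNNReal _ (gaussianPDFReal_nonneg 0 v _)]
  unfold gaussianPDFReal
  simp_rw [sub_zero, mul_assoc]
  rw [integral_const_mul, gauss_cos_aux (v:ℝ) hv t,
    show (2 : ℝ) * (Real.pi * (v:ℝ)) = 2 * Real.pi * (v:ℝ) from by ring, ← mul_assoc,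
    inv_mul_cancel₀ (by positivity : Real.sqrt (2 * Real.pi * (v:ℝ)) ≠ 0), one_mul]


/-- For `ℓ > 0`, with `w ~ N(0, 1/ℓ²)` and independently `b` uniform on `[0, 2π]`,
`E[2 cos(wx + b) cos(wy + b)] = exp(−(x−y)²/(2ℓ²))`: the random Fourier feature pairing
reproduces the Gaussian (RBF) kernel with length scale `ℓ`. -/
theorem rff_kernel_one_dim (ℓ : ℝ) (hℓ : 0 < ℓ) (x y : ℝ) :
    ∫ p : ℝ × ℝ, 2 * Real.cos (p.1 * x + p.2) * Real.cos (p.1 * y + p.2)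
        ∂((gaussianReal 0 (Real.toNNReal (1 / ℓ ^ 2))).prod
          ((ENNReal.ofReal (2 * Real.pi))⁻¹ • volume.restrict (Set.Icc 0 (2 * Real.pi))))
      = Real.exp (-(x - y) ^ 2 / (2 * ℓ ^ 2)) := by
  have hπ : 0 < 2 * Real.pi := by positivity
  set v : NNReal := Real.toNNReal (1 / ℓ ^ 2) with hvdef
  have hv : (v : ℝ) = 1 / ℓ ^ 2 := Real.coe_toNNReal _ (by positivity)
  have hvpos : 0 < (v : ℝ) := by rw [hv]; positivity
  set ν : Measure ℝ := (ENNReal.ofReal (2 * Real.pi))⁻¹ • volume.restrict (Set.Icc 0 (2 * Real.pi))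
    with hν
  haveI : IsProbabilityMeasure ν := by
    constructor
    rw [hν]
    simp only [Measure.smul_apply, Measure.restrict_apply MeasurableSet.univ, Set.univ_inter,
      Real.volume_Icc, sub_zero, smul_eq_mul]
    exact ENNReal.inv_mul_cancel (ENNReal.ofReal_pos.mpr hπ).ne' ENNReal.ofReal_ne_top
  set μp : Measure (ℝ × ℝ) := (gaussianReal 0 v).prod ν with hμp
  have hpt : ∀ p : ℝ × ℝ, 2 * Real.cos (p.1 * x + p.2) * Real.cos (p.1 * y + p.2)
      = Real.cos (p.1 * (x - y)) + Real.cos (p.1 * (x + y) + 2 * p.2) := by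
    intro p
    have h1 : p.1 * (x - y) = (p.1 * x + p.2) - (p.1 * y + p.2) := by ring
    have h2 : p.1 * (x + y) + 2 * p.2 = (p.1 * x + p.2) + (p.1 * y + p.2) := by ring
    rw [h1, h2, Real.cos_sub (p.1 * x + p.2) (p.1 * y + p.2),
      Real.cos_add (p.1 * x + p.2) (p.1 * y + p.2)]
    ring
  have hi1 : Integrable (fun p : ℝ × ℝ => Real.cos (p.1 * (x - y))) μp := by
    refine (integrable_const 1).mono' ?_ ?_
    · exact (Real.continuous_cos.comp (continuous_fst.mul continuous_const)).aestronglyMeasurable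
    · exact Filter.Eventually.of_forall fun p => by simpa using Real.abs_cos_le_one _
  have hi2 : Integrable (fun p : ℝ × ℝ => Real.cos (p.1 * (x + y) + 2 * p.2)) μp := by
    refine (integrable_const 1).mono' ?_ ?_
    · exact (Real.continuous_cos.comp ((continuous_fst.mul continuous_const).add
        (continuous_const.mul continuous_snd))).aestronglyMeasurable
    · exact Filter.Eventually.of_forall fun p => by simpa using Real.abs_cos_le_one _
  rw [integral_congr_ae (Filter.Eventually.of_forall hpt), integral_add hi1 hi2]
  have e1 : (∫ p : ℝ × ℝ, Real.cos (p.1 * (x - y)) ∂μp)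
      = ∫ w : ℝ, Real.cos (w * (x - y)) ∂(gaussianReal 0 v) := by
    rw [hμp, integral_prod _ hi1]
    simp
  have e2 : (∫ p : ℝ × ℝ, Real.cos (p.1 * (x + y) + 2 * p.2) ∂μp) = 0 := by
    rw [hμp, integral_prod _ hi2]
    have inner : ∀ w : ℝ, (∫ b : ℝ, Real.cos (w * (x + y) + 2 * b) ∂ν) = 0 := by
      intro w
      rw [hν, integral_smul_measure]
      have hIcc : (∫ b in Set.Icc (0:ℝ) (2 * Real.pi), Real.cos (w * (x + y) + 2 * b)) = 0 := by
        rw [integral_Icc_eq_integral_Ioc, ← intervalIntegral.integral_of_le hπ.le]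
        have hcomm : ∀ b : ℝ, Real.cos (w * (x + y) + 2 * b) = Real.cos (2 * b + w * (x + y)) :=
          fun b => by rw [add_comm]
        simp_rw [hcomm]
        rw [intervalIntegral.integral_comp_mul_add Real.cos two_ne_zero (w * (x + y))]
        rw [integral_cos]
        have h4 : 2 * (2 * Real.pi) + w * (x + y) = (w * (x + y) + 2 * Real.pi) + 2 * Real.pi := by
          ring
        have h5 : 2 * 0 + w * (x + y) = w * (x + y) := by ring
        rw [h4, h5, Real.sin_add_two_pi, Real.sin_add_two_pi, sub_self, smul_zero]
      rw [hIcc, smul_zero]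
    simp_rw [inner]
    simp
  rw [e1, e2, add_zero, gauss_cos v hvpos (x - y), hv]
  rw [show -((1/ℓ^2 : ℝ) * (x-y)^2)/2 = -(x-y)^2/(2*ℓ^2) by
    field_simp]
end

section
/- Let d ≥ 1, ℓ > 0, and x, y ∈ ℝ^d. Let W = (W_1, …, W_d) have independent components each distributed according to the Gaussian measure N(0, 1/ℓ²) on ℝ. Then E_W[cos(Wᵀ(x − y))] = exp(−‖x − y‖² / (2ℓ²)), where ‖·‖ is the Euclidean norm on ℝ^d; that is, the Gaussian spectral measure of random Fourier features reproduces the Gaussian (RBF) kernel with length scale ℓ. -/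
open MeasureTheory ProbabilityTheory Complex
open scoped ENNReal NNReal Real

lemma gaussian_cexp (v : ℝ) (hv : 0 < v) (c : ℝ) :
    ∫ w : ℝ, Complex.exp (↑(w * c) * Complex.I) ∂(gaussianReal 0 v.toNNReal)
      = Complex.exp (-(v * c ^ 2) / 2) := by
  have hv' : v.toNNReal ≠ 0 := by simp [Real.toNNReal_eq_zero, not_le, hv]
  rw [gaussianReal_of_var_ne_zero 0 hv']
  have hpdf : gaussianPDF 0 v.toNNReal =
      fun w => ((Real.toNNReal (gaussianPDFReal 0 v.toNNReal w)) : ℝ≥0∞) := by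
    ext w; rw [gaussianPDF]; rw [ENNReal.ofReal]
  rw [hpdf, integral_withDensity_eq_integral_smul
    ((measurable_gaussianPDFReal 0 v.toNNReal).real_toNNReal)]
  have hcoe : ((v.toNNReal : ℝ)) = v := Real.coe_toNNReal _ hv.le
  have hs : Real.sqrt (2 * Real.pi * v) ≠ 0 := by
    positivity
  have key : ∀ w : ℝ, (Real.toNNReal (gaussianPDFReal 0 v.toNNReal w))
        • Complex.exp (↑(w * c) * Complex.I)
      = ((Real.sqrt (2 * Real.pi * v))⁻¹ : ℂ) *
        Complex.exp ((-(1 / (2 * v)) : ℂ) * w ^ 2 + (Complex.I * c) * w + 0) := by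
    intro w
    rw [NNReal.smul_def, Real.coe_toNNReal _ (gaussianPDFReal_nonneg _ _ _)]
    rw [gaussianPDFReal, hcoe]
    rw [real_smul]
    push_cast
    rw [mul_assoc, ← Complex.exp_add]
    congr 1
    have : (v : ℂ) ≠ 0 := by exact_mod_cast hv.ne'
    field_simp
    ring
  simp_rw [key]
  rw [integral_const_mul, integral_cexp_quadratic (by
    rw [show (-(1 / (2 * (v:ℂ)))) = ((-(1/(2*v)) : ℝ) : ℂ) by push_cast; ring, Complex.ofReal_re]
    have : 0 < 1/(2*v) := by positivity
    linarith) (Complex.I * c) 0]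
  have h1 : ((Real.pi : ℂ) / -(-(1 / (2 * (v:ℂ))))) = ((2 * Real.pi * v : ℝ) : ℂ) := by
    have : (v : ℂ) ≠ 0 := by exact_mod_cast hv.ne'
    push_cast
    field_simp
  have h2 : ((2 * Real.pi * v : ℝ) : ℂ) ^ (1/2 : ℂ) = (Real.sqrt (2 * Real.pi * v) : ℂ) := by
    rw [Real.sqrt_eq_rpow, show (1/2:ℂ) = ((1/2:ℝ):ℂ) by norm_num,
      ← Complex.ofReal_cpow (by positivity)]
  have h3 : (0 : ℂ) - (Complex.I * c) ^ 2 / (4 * -(1 / (2 * (v:ℂ)))) = -((v:ℂ) * c ^ 2) / 2 := by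
    have : (v : ℂ) ≠ 0 := by exact_mod_cast hv.ne'
    rw [mul_pow, Complex.I_sq]
    field_simp
    ring
  rw [h1, h2, h3, ← mul_assoc]
  rw [show ((Real.sqrt (2 * Real.pi * v) : ℂ))⁻¹ * (Real.sqrt (2 * Real.pi * v) : ℂ) = 1 by
    rw [inv_mul_cancel₀]; exact_mod_cast hs, one_mul]


/-- For `d ≥ 1`, `ℓ > 0` and `x, y ∈ ℝᵈ`, with `W` having i.i.d. `N(0, 1/ℓ²)` components,
`E_W[cos(Wᵀ(x − y))] = exp(−‖x − y‖²/(2ℓ²))`: the Gaussian spectral measure reproduces the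
Gaussian (RBF) kernel with length scale `ℓ`. -/
theorem rff_kernel_multi_dim (d : ℕ) (hd : 1 ≤ d) (ℓ : ℝ) (hℓ : 0 < ℓ)
    (x y : Fin d → ℝ) :
    ∫ W : Fin d → ℝ, Real.cos (∑ i, W i * (x i - y i))
        ∂(Measure.pi fun _ : Fin d => gaussianReal 0 (Real.toNNReal (1 / ℓ ^ 2)))
      = Real.exp (-(∑ i, (x i - y i) ^ 2) / (2 * ℓ ^ 2)) := by
  set v : ℝ := 1 / ℓ ^ 2 with hvdef
  have hv : 0 < v := by positivity
  set μ : Measure (Fin d → ℝ) :=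
    Measure.pi fun _ : Fin d => gaussianReal 0 (Real.toNNReal (1 / ℓ ^ 2)) with hμdef
  haveI : IsProbabilityMeasure μ := by
    rw [hμdef]; infer_instance
  have hmeas : Measurable fun W : Fin d → ℝ =>
      Complex.exp (↑(∑ i, W i * (x i - y i)) * Complex.I) := by
    apply Complex.measurable_exp.comp
    apply Measurable.mul_const
    apply Complex.measurable_ofReal.comp
    exact Finset.measurable_sum _ fun i _ => ((measurable_pi_apply i).mul_const _)
  have hInt : Integrable (fun W : Fin d → ℝ =>
      Complex.exp (↑(∑ i, W i * (x i - y i)) * Complex.I)) μ := by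
    refine (integrable_const (1 : ℝ)).mono' hmeas.aestronglyMeasurable ?_
    filter_upwards with W
    rw [Complex.norm_exp_ofReal_mul_I]
  have hC : ∫ W : Fin d → ℝ, Complex.exp (↑(∑ i, W i * (x i - y i)) * Complex.I) ∂μ
      = ((Real.exp (-(∑ i, (x i - y i) ^ 2) / (2 * ℓ ^ 2)) : ℝ) : ℂ) := by
    have hsplit : ∀ W : Fin d → ℝ,
        Complex.exp (↑(∑ i, W i * (x i - y i)) * Complex.I)
          = ∏ i, Complex.exp (↑(W i * (x i - y i)) * Complex.I) := by
      intro W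
      rw [← Complex.exp_sum]
      congr 1
      push_cast
      rw [Finset.sum_mul]
    simp_rw [hsplit]
    letI : MeasureSpace ℝ := ⟨gaussianReal 0 v.toNNReal⟩
    haveI : SigmaFinite (volume : Measure ℝ) :=
      inferInstanceAs (SigmaFinite (gaussianReal 0 v.toNNReal))
    have hμvol : μ = (volume : Measure (Fin d → ℝ)) := by
      rw [hμdef]; rfl
    erw [hμvol,
      integral_fintype_prod_eq_prod (𝕜 := ℂ) (ι := Fin d) (μ := fun _ => (volume : Measure ℝ))
        (f := fun i (w : ℝ) => Complex.exp (↑(w * (x i - y i)) * Complex.I))]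
    have : ∀ i, (∫ w : ℝ, Complex.exp (↑(w * (x i - y i)) * Complex.I))
        = Complex.exp (-((v:ℂ) * (((x i - y i) : ℝ) : ℂ) ^ 2) / 2) :=
      fun i => gaussian_cexp v hv _
    simp_rw [this, ← Complex.exp_sum]
    rw [Complex.ofReal_exp]
    congr 1
    have hℓ2 : (ℓ : ℂ) ≠ 0 := by exact_mod_cast hℓ.ne'
    have hsum : ∀ a : ℂ, -((v:ℂ) * a) / 2 = a * (-(v:ℂ) / 2) := fun a => by ring
    simp_rw [hsum, ← Finset.sum_mul]
    push_cast [hvdef]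
    field_simp
  have hre : ∀ W : Fin d → ℝ, Real.cos (∑ i, W i * (x i - y i))
      = (Complex.exp (↑(∑ i, W i * (x i - y i)) * Complex.I)).re :=
    fun W => (Complex.exp_ofReal_mul_I_re _).symm
  simp_rw [hre]
  have h := integral_re (𝕜 := ℂ) hInt
  simp only [RCLike.re_to_complex] at h
  rw [h, hC, Complex.ofReal_re]
end
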